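/- arXiv:2204.13041 — 3 statements merged into one kernel-verified Lean document; each statement's English description precedes it below -/
import Mathlib

section
/- In Proto-Quipper-Dyn, if the typing judgment Γ ⊢_α V : B is derivable for a value V, then α = 1. -/
/-!
# Proto-Quipper-Dyn: syntax, type system, and operational semantics

Proto-Quipper-Dyn is parameterized by a small symmetric monoidal category `M` of quantum
circuits (abstracted below by a type `Circuit` of circuits together with a typing relation
between label contexts) and, for circuit-execution time, a category `Q` of quantum operations
(abstracted by a type of states together with `operate` and `read` operations).
-/

namespace PQD

abbrev Var := ℕ
abbrev Label := ℕ

/-- Types of Proto-Quipper-Dyn.  Modalities `α ∈ {0,1}` are represented by `Bool`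
(`true` = 1, `false` = 0) and combined by boolean conjunction `&&`. -/
inductive Ty : Type
  | unit : Ty
  | qubit : Ty
  | bit : Ty
  | bool : Ty
  | bang (α : Bool) (A : Ty) : Ty
  | arrow (A : Ty) (α : Bool) (B : Ty) : Ty
  | circ (S U : Ty) : Ty
  | tensor (A B : Ty) : Ty

/-- Simple types: built from `Unit`, `Qubit`, `Bit` by `⊗`. -/
inductive IsSimple : Ty → Prop
  | unit : IsSimple .unit
  | qubit : IsSimple .qubit
  | bit : IsSimple .bit
  | tensor {S U : Ty} : IsSimple S → IsSimple U → IsSimple (.tensor S U)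

/-- Parameter types: built from `Unit`, `Bool`, `!_α A`, `Circ(S,U)` by `⊗`. -/
inductive IsParam : Ty → Prop
  | unit : IsParam .unit
  | bool : IsParam .bool
  | bang {α : Bool} {A : Ty} : IsParam (.bang α A)
  | circ {S U : Ty} : IsParam (.circ S U)
  | tensor {P R : Ty} : IsParam P → IsParam R → IsParam (.tensor P R)

/-- A wire type is `Qubit` or `Bit`. -/
def Ty.isWire (A : Ty) : Prop := A = .qubit ∨ A = .bit

/-- Context entries: variable bindings `x : A` and label bindings `ℓ : Qubit/Bit`. -/
inductive Entry : Type
  | var (x : Var) (A : Ty)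
  | lab (l : Label) (W : Ty)

/-- Contexts assign types to variables and `Qubit`/`Bit` to labels. -/
abbrev Ctx := List Entry

/-- A parameter context assigns only parameter types to variables (and contains no labels). -/
def IsParamCtx (Γ : Ctx) : Prop := ∀ e ∈ Γ, ∃ x P, e = Entry.var x P ∧ IsParam P

/-- A label context assigns only `Qubit` or `Bit` to labels. -/
def IsLabelCtx (Γ : Ctx) : Prop := ∀ e ∈ Γ, ∃ l W, e = Entry.lab l W ∧ W.isWire

/-- Terms of Proto-Quipper-Dyn, parameterized by the type of circuits. -/
inductive Term (Circuit : Type) : Type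
  | const (c : ℕ)
  | var (x : Var)
  | lab (l : Label)
  | lam (x : Var) (M : Term Circuit)
  | app (M N : Term Circuit)
  | unit
  | true_
  | false_
  | circ (a : Term Circuit) (C : Circuit) (b : Term Circuit)
  | apply (M N : Term Circuit)
  | force (M : Term Circuit)
  | lift (M : Term Circuit)
  | box (S : Ty) (M : Term Circuit)
  | pair (M N : Term Circuit)
  | letp (x y : Var) (N M : Term Circuit)
  | dynlift (M : Term Circuit)

variable {Circuit : Type}

/-- Simple terms `a, b ::= ℓ | Unit | (a, b)`. -/
inductive IsSimpleTerm : Term Circuit → Prop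
  | lab (l : Label) : IsSimpleTerm (.lab l)
  | unit : IsSimpleTerm .unit
  | pair {a b : Term Circuit} : IsSimpleTerm a → IsSimpleTerm b → IsSimpleTerm (.pair a b)

/-- Values `V ::= x | ℓ | λx.M | lift M | (a, C, b) | (V, V') | Unit` (together with the
boolean constants). -/
inductive IsValue : Term Circuit → Prop
  | var (x : Var) : IsValue (.var x)
  | lab (l : Label) : IsValue (.lab l)
  | lam (x : Var) (M : Term Circuit) : IsValue (.lam x M)
  | lift (M : Term Circuit) : IsValue (.lift M)
  | circ (a : Term Circuit) (C : Circuit) (b : Term Circuit) : IsValue (.circ a C b)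
  | unit : IsValue .unit
  | true_ : IsValue .true_
  | false_ : IsValue .false_
  | pair {V W : Term Circuit} : IsValue V → IsValue W → IsValue (.pair V W)

/-- Substitution `[V/x]M` of the term `V` for the variable `x` in `M`. -/
def subst (V : Term Circuit) (x : Var) : Term Circuit → Term Circuit
  | .const c => .const c
  | .var y => if y = x then V else .var y
  | .lab l => .lab l
  | .lam y M => if y = x then .lam y M else .lam y (subst V x M)
  | .app M N => .app (subst V x M) (subst V x N)
  | .unit => .unit
  | .true_ => .true_
  | .false_ => .false_
  | .circ a C b => .circ a C b
  | .apply M N => .apply (subst V x M) (subst V x N)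
  | .force M => .force (subst V x M)
  | .lift M => .lift (subst V x M)
  | .box S M => .box S (subst V x M)
  | .pair M N => .pair (subst V x M) (subst V x N)
  | .letp y z N M => .letp y z (subst V x N) (if x = y ∨ x = z then M else subst V x M)
  | .dynlift M => .dynlift (subst V x M)

/-- The typing judgment `Γ ⊢_α M : A` of Proto-Quipper-Dyn (Figure 2), parameterized by the
typing relation `CT C Ξ Ξ'` of the circuit category (`C : Ξ → Ξ'` in `M`).  In the binary
rules the two premises share the parameter part `Φ` of the context (`Γ₁ + Γ₂`). -/
inductive HasTy (CT : Circuit → Ctx → Ctx → Prop) : Ctx → Bool → Term Circuit → Ty → Prop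
  | var {Φ : Ctx} {x : Var} {A : Ty} :
      IsParamCtx Φ → HasTy CT (Φ ++ [.var x A]) true (.var x) A
  | lab {l : Label} {W : Ty} :
      W.isWire → HasTy CT [.lab l W] true (.lab l) W
  | unit {Φ : Ctx} : IsParamCtx Φ → HasTy CT Φ true .unit .unit
  | true_ {Φ : Ctx} : IsParamCtx Φ → HasTy CT Φ true .true_ .bool
  | false_ {Φ : Ctx} : IsParamCtx Φ → HasTy CT Φ true .false_ .bool
  | lam {Γ : Ctx} {x : Var} {A : Ty} {α : Bool} {M : Term Circuit} {B : Ty} :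
      HasTy CT (Γ ++ [.var x A]) α M B →
      HasTy CT Γ true (.lam x M) (.arrow A α B)
  | app {Φ Γ₁ Γ₂ : Ctx} {α₁ α₂ β : Bool} {M N : Term Circuit} {A B : Ty} :
      IsParamCtx Φ →
      HasTy CT (Φ ++ Γ₁) α₁ M (.arrow A β B) → HasTy CT (Φ ++ Γ₂) α₂ N A →
      HasTy CT (Φ ++ Γ₁ ++ Γ₂) (α₁ && α₂ && β) (.app M N) B
  | lift {Φ : Ctx} {α : Bool} {M : Term Circuit} {A : Ty} :
      IsParamCtx Φ → HasTy CT Φ α M A →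
      HasTy CT Φ true (.lift M) (.bang α A)
  | force {Γ : Ctx} {α β : Bool} {M : Term Circuit} {A : Ty} :
      HasTy CT Γ β M (.bang α A) →
      HasTy CT Γ (α && β) (.force M) A
  | box {Γ : Ctx} {α : Bool} {S U : Ty} {M : Term Circuit} :
      IsSimple S → IsSimple U →
      HasTy CT Γ α M (.bang true (.arrow S true U)) →
      HasTy CT Γ α (.box S M) (.circ S U)
  | applyc {Φ Γ₁ Γ₂ : Ctx} {α β : Bool} {M N : Term Circuit} {S U : Ty} :
      IsParamCtx Φ →
      HasTy CT (Φ ++ Γ₁) α M (.circ S U) → HasTy CT (Φ ++ Γ₂) β N S →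
      HasTy CT (Φ ++ Γ₁ ++ Γ₂) (α && β) (.apply M N) U
  | circ {Φ Ξ₁ Ξ₂ : Ctx} {a b : Term Circuit} {C : Circuit} {S U : Ty} :
      IsParamCtx Φ → IsLabelCtx Ξ₁ → IsLabelCtx Ξ₂ →
      HasTy CT Ξ₁ true a S → HasTy CT Ξ₂ true b U → CT C Ξ₁ Ξ₂ →
      HasTy CT Φ true (.circ a C b) (.circ S U)
  | dynlift {Γ : Ctx} {α : Bool} {M : Term Circuit} :
      HasTy CT Γ α M .bit →
      HasTy CT Γ false (.dynlift M) .bool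
  | pair {Φ Γ₁ Γ₂ : Ctx} {α₁ α₂ : Bool} {M N : Term Circuit} {A B : Ty} :
      IsParamCtx Φ →
      HasTy CT (Φ ++ Γ₁) α₁ M A → HasTy CT (Φ ++ Γ₂) α₂ N B →
      HasTy CT (Φ ++ Γ₁ ++ Γ₂) (α₁ && α₂) (.pair M N) (.tensor A B)
  | letp {Φ Γ₁ Γ₂ : Ctx} {α₁ α₂ : Bool} {x y : Var} {M N : Term Circuit} {A B D : Ty} :
      IsParamCtx Φ →
      HasTy CT (Φ ++ Γ₁ ++ [.var x A, .var y B]) α₁ M D →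
      HasTy CT (Φ ++ Γ₂) α₂ N (.tensor A B) →
      HasTy CT (Φ ++ Γ₁ ++ Γ₂) (α₁ && α₂) (.letp x y N M) D


/-- If the typing judgment `Γ ⊢_α V : B` is derivable for a value `V`,
then `α = 1`. -/
theorem value_has_modality_one {Circuit : Type} {CT : Circuit → Ctx → Ctx → Prop}
    {Γ : Ctx} {α : Bool} {V : Term Circuit} {B : Ty}
    (hval : IsValue V) (h : HasTy CT Γ α V B) : α = true := by
  induction h with
  | pair _ _ _ ih1 ih2 =>
    cases hval with
    | pair hv hw => simp [ih1 hv, ih2 hw]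
  | _ => first | rfl | cases hval

end PQD
end

section
/- In Proto-Quipper-Dyn, if the typing judgment Γ ⊢_α V : P is derivable for a value V and a parameter type P, then α = 1 and Γ is a parameter context (it assigns only parameter types to variables and contains no labels). -/
/-!
# Proto-Quipper-Dyn: syntax, type system, and operational semantics

Proto-Quipper-Dyn is parameterized by a small symmetric monoidal category `M` of quantum
circuits (abstracted below by a type `Circuit` of circuits together with a typing relation
between label contexts) and, for circuit-execution time, a category `Q` of quantum operations
(abstracted by a type of states together with `operate` and `read` operations).
-/

namespace PQD

variable {Circuit : Type}

/-- If the typing judgment `Γ ⊢_α V : P` is derivable for a value `V` and a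
parameter type `P`, then `α = 1` and `Γ` is a parameter context. -/
theorem value_of_param_type {Circuit : Type} {CT : Circuit → Ctx → Ctx → Prop}
    {Γ : Ctx} {α : Bool} {V : Term Circuit} {P : Ty}
    (hval : IsValue V) (hP : IsParam P) (h : HasTy CT Γ α V P) :
    α = true ∧ IsParamCtx Γ := by
  induction h with
  | var hΦ =>
      refine ⟨rfl, fun e he => ?_⟩
      rcases List.mem_append.1 he with he | he
      · exact hΦ e he
      · rcases List.mem_singleton.1 he with rfl; exact ⟨_, _, rfl, hP⟩
  | lab hW =>
      rcases hW with rfl | rfl <;> cases hP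
  | unit hΦ => exact ⟨rfl, hΦ⟩
  | true_ hΦ => exact ⟨rfl, hΦ⟩
  | false_ hΦ => exact ⟨rfl, hΦ⟩
  | lam _ _ => cases hP
  | app _ _ _ _ _ => cases hval
  | lift hΦ _ _ => exact ⟨rfl, hΦ⟩
  | force _ _ => cases hval
  | box _ _ _ _ => cases hval
  | applyc _ _ _ _ _ => cases hval
  | circ hΦ _ _ _ _ _ _ _ => exact ⟨rfl, hΦ⟩
  | dynlift _ _ => cases hval
  | pair _ _ _ ih1 ih2 =>
      cases hval with
      | pair hv1 hv2 =>
        cases hP with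
        | tensor hA hB =>
          obtain ⟨ha1, hc1⟩ := ih1 hv1 hA
          obtain ⟨ha2, hc2⟩ := ih2 hv2 hB
          subst ha1; subst ha2
          refine ⟨rfl, fun e he => ?_⟩
          rcases List.mem_append.1 he with he | he
          · exact hc1 e he
          · exact hc2 e (List.mem_append.2 (Or.inr he))
  | letp _ _ _ _ _ => cases hval

end PQD
end

section
/- Let C be a symmetric monoidal category with monoidal unit I, let T be a strong monad on C with unit η, multiplication μ, strength t and costrength s (s defined from t via the symmetry), and let Bool, Bit be objects of C with morphisms init : Bool → Bit and dyn : Bit → T(Bool) satisfying dyn ∘ init = η_Bool. Then for every object C, every morphism q : I → T(C) and every morphism b : I → Bool, the following equation of morphisms I → T(Bool ⊗ C) holds: μ ∘ T(s_{Bool,C}) ∘ T(dyn ⊗ id_C) ∘ μ ∘ T(s_{Bit,C}) ∘ t_{T(Bit),C} ∘ ((η_Bit ∘ init ∘ b) ⊗ id_{T(C)}) ∘ λ_{T(C)}⁻¹ ∘ q = T((b ⊗ id_C) ∘ λ_C⁻¹) ∘ q, where λ is the left unitor. -/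
open CategoryTheory MonoidalCategory

universe v u

/-- Let `C` be a symmetric monoidal category with unit `I`, `T` a strong
monad on `C` with strength `t` and costrength `s` (defined from `t` via the symmetry), and let
`Bool`, `Bit` be objects with `init : Bool ⟶ Bit` and `dyn : Bit ⟶ T Bool` satisfying
`dyn ∘ init = η`.  Then for every object `C`, every `q : I ⟶ T C` and every `b : I ⟶ Bool`,
`μ ∘ T(s) ∘ T(dyn ⊗ id) ∘ μ ∘ T(s) ∘ t ∘ ((η ∘ init ∘ b) ⊗ id) ∘ λ⁻¹ ∘ q
  = T((b ⊗ id) ∘ λ⁻¹) ∘ q`. -/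
theorem dynlift_init_coherence
    {C : Type u} [Category.{v} C] [MonoidalCategory C] [SymmetricCategory C]
    (T : Monad C)
    (t : ∀ X Y : C, X ⊗ T.obj Y ⟶ T.obj (X ⊗ Y))
    (t_natural : ∀ {X X' Y Y' : C} (f : X ⟶ X') (g : Y ⟶ Y'),
      (f ⊗ₘ T.map g) ≫ t X' Y' = t X Y ≫ T.map (f ⊗ₘ g))
    (t_unit : ∀ X Y : C, (X ◁ T.η.app Y) ≫ t X Y = T.η.app (X ⊗ Y))
    (t_mul : ∀ X Y : C,
      (X ◁ T.μ.app Y) ≫ t X Y = t X (T.obj Y) ≫ T.map (t X Y) ≫ T.μ.app (X ⊗ Y))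
    (t_unitor : ∀ Y : C, t (𝟙_ C) Y ≫ T.map (λ_ Y).hom = (λ_ (T.obj Y)).hom)
    (t_assoc : ∀ X Y Z : C,
      (α_ X Y (T.obj Z)).hom ≫ (X ◁ t Y Z) ≫ t X (Y ⊗ Z)
        = t (X ⊗ Y) Z ≫ T.map (α_ X Y Z).hom)
    (s : ∀ X Y : C, T.obj X ⊗ Y ⟶ T.obj (X ⊗ Y))
    (s_def : ∀ X Y : C, s X Y = (β_ (T.obj X) Y).hom ≫ t Y X ≫ T.map (β_ Y X).hom)
    (BoolO BitO : C) (init : BoolO ⟶ BitO) (dyn : BitO ⟶ T.obj BoolO)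
    (dyn_init : init ≫ dyn = T.η.app BoolO)
    (Cobj : C) (q : 𝟙_ C ⟶ T.obj Cobj) (b : 𝟙_ C ⟶ BoolO) :
    q ≫ (λ_ (T.obj Cobj)).inv ≫ ((b ≫ init ≫ T.η.app BitO) ⊗ₘ 𝟙 (T.obj Cobj))
        ≫ t (T.obj BitO) Cobj ≫ T.map (s BitO Cobj) ≫ T.μ.app (BitO ⊗ Cobj)
        ≫ T.map (dyn ▷ Cobj) ≫ T.map (s BoolO Cobj) ≫ T.μ.app (BoolO ⊗ Cobj)
      = q ≫ T.map ((λ_ Cobj).inv ≫ (b ▷ Cobj)) := by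
  -- (η ⊗ 𝟙) ≫ s = η
  have hs : ∀ (X Z : C), (T.η.app X ⊗ₘ 𝟙 Z) ≫ s X Z = T.η.app (X ⊗ Z) := by
    intro X Z
    rw [s_def, ← Category.assoc, BraidedCategory.braiding_naturality,
        Category.assoc, MonoidalCategory.id_tensorHom,
        ← Category.assoc (Z ◁ T.η.app X), t_unit]
    have hn := T.η.naturality (β_ Z X).hom
    simp only [Functor.id_map] at hn
    rw [← hn, ← Category.assoc]
    simp
  -- λ⁻¹ ≫ t = T λ⁻¹
  have hl : (λ_ (T.obj Cobj)).inv ≫ t (𝟙_ C) Cobj = T.map (λ_ Cobj).inv := by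
    rw [Iso.inv_comp_eq, ← t_unitor Cobj]
    simp [← Functor.map_comp]
  -- naturality of t
  have h1 : ((b ≫ init ≫ T.η.app BitO) ⊗ₘ 𝟙 (T.obj Cobj)) ≫ t (T.obj BitO) Cobj
      = t (𝟙_ C) Cobj ≫ T.map ((b ≫ init ≫ T.η.app BitO) ⊗ₘ 𝟙 Cobj) := by
    have h := t_natural (b ≫ init ≫ T.η.app BitO) (𝟙 Cobj)
    simpa using h
  have hsm : ∀ (X Z : C), T.map (T.η.app X ⊗ₘ 𝟙 Z) ≫ T.map (s X Z) ≫ T.μ.app (X ⊗ Z)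
      = 𝟙 (T.obj (X ⊗ Z)) := by
    intro X Z
    rw [← Functor.map_comp_assoc, hs]
    simp
  -- first T(s) ≫ μ collapses
  have h2 : T.map ((b ≫ init ≫ T.η.app BitO) ⊗ₘ 𝟙 Cobj) ≫ T.map (s BitO Cobj)
        ≫ T.μ.app (BitO ⊗ Cobj)
      = T.map ((b ≫ init) ⊗ₘ 𝟙 Cobj) := by
    have hsplit : ((b ≫ init ≫ T.η.app BitO) ⊗ₘ 𝟙 Cobj)
        = ((b ≫ init) ⊗ₘ 𝟙 Cobj) ≫ (T.η.app BitO ⊗ₘ 𝟙 Cobj) := by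
      rw [MonoidalCategory.tensorHom_comp_tensorHom]; simp
    rw [hsplit, Functor.map_comp, Category.assoc, hsm, Category.comp_id]
  -- dyn after init is η
  have h3 : ((b ≫ init) ⊗ₘ 𝟙 Cobj) ≫ (dyn ▷ Cobj)
      = (b ⊗ₘ 𝟙 Cobj) ≫ (T.η.app BoolO ⊗ₘ 𝟙 Cobj) := by
    rw [← MonoidalCategory.tensorHom_id, MonoidalCategory.tensorHom_comp_tensorHom,
        MonoidalCategory.tensorHom_comp_tensorHom]
    simp [dyn_init]
  -- second T(s) ≫ μ collapses
  have h4 : T.map ((b ≫ init) ⊗ₘ 𝟙 Cobj) ≫ T.map (dyn ▷ Cobj)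
        ≫ T.map (s BoolO Cobj) ≫ T.μ.app (BoolO ⊗ Cobj)
      = T.map (b ⊗ₘ 𝟙 Cobj) := by
    rw [← Functor.map_comp_assoc, h3, Functor.map_comp_assoc, hsm, Category.comp_id]
  calc q ≫ (λ_ (T.obj Cobj)).inv ≫ ((b ≫ init ≫ T.η.app BitO) ⊗ₘ 𝟙 (T.obj Cobj))
        ≫ t (T.obj BitO) Cobj ≫ T.map (s BitO Cobj) ≫ T.μ.app (BitO ⊗ Cobj)
        ≫ T.map (dyn ▷ Cobj) ≫ T.map (s BoolO Cobj) ≫ T.μ.app (BoolO ⊗ Cobj)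
      = q ≫ (λ_ (T.obj Cobj)).inv ≫ t (𝟙_ C) Cobj
          ≫ T.map ((b ≫ init ≫ T.η.app BitO) ⊗ₘ 𝟙 Cobj)
          ≫ T.map (s BitO Cobj) ≫ T.μ.app (BitO ⊗ Cobj)
          ≫ T.map (dyn ▷ Cobj) ≫ T.map (s BoolO Cobj) ≫ T.μ.app (BoolO ⊗ Cobj) := by
        rw [reassoc_of% h1]
    _ = q ≫ (λ_ (T.obj Cobj)).inv ≫ t (𝟙_ C) Cobj
          ≫ T.map ((b ≫ init) ⊗ₘ 𝟙 Cobj)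
          ≫ T.map (dyn ▷ Cobj) ≫ T.map (s BoolO Cobj) ≫ T.μ.app (BoolO ⊗ Cobj) := by
        rw [reassoc_of% h2]
    _ = q ≫ (λ_ (T.obj Cobj)).inv ≫ t (𝟙_ C) Cobj ≫ T.map (b ⊗ₘ 𝟙 Cobj) := by
        rw [h4]
    _ = q ≫ T.map ((λ_ Cobj).inv ≫ (b ▷ Cobj)) := by
        rw [← Category.assoc (λ_ (T.obj Cobj)).inv, hl, ← Functor.map_comp,
            MonoidalCategory.tensorHom_id]
end
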